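/- arXiv:2605.01237 — 2 statements merged into one kernel-verified Lean document; each statement's English description precedes it below -/
import Mathlib

section
/- Fix τ∈(0,1), λ≥0, and a location i∈[1:n]. Let θ̂^max_i := max{θ_i : θ∈S^τ} and let θ̂^max∈S^τ attain this value at location i. Let Ĵ=[a:b] be the largest discrete interval containing i such that θ̂^max_u ≤ θ̂^max_i for all u∈Ĵ. Then u^τ_{I,Ĵ} < |I| for every discrete interval I⊆Ĵ containing i. -/
open scoped BigOperators

noncomputable section

namespace QTVD

/-- Quantile (check) loss `ρ_τ(x) = max{τx, (τ-1)x}`. -/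
def qloss (τ x : ℝ) : ℝ := max (τ * x) ((τ - 1) * x)

/-- Total variation `TV(θ) = ∑ |θ_{i+1} - θ_i|` (coordinates indexed `0,…,n-1`). -/
def TV {n : ℕ} (θ : Fin n → ℝ) : ℝ :=
  ∑ i : Fin n, if h : (i : ℕ) + 1 < n then |θ ⟨(i : ℕ) + 1, h⟩ - θ i| else 0

/-- Quantile TVD objective. -/
def obj {n : ℕ} (τ lam : ℝ) (y θ : Fin n → ℝ) : ℝ :=
  (∑ i : Fin n, qloss τ (y i - θ i)) + lam * TV θ

/-- Quantile TVD solution set `S^τ`. -/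
def sol {n : ℕ} (τ lam : ℝ) (y : Fin n → ℝ) : Set (Fin n → ℝ) :=
  {θ | ∀ η : Fin n → ℝ, obj τ lam y θ ≤ obj τ lam y η}

/-- `k`-th smallest entry of `y` restricted to `I` (as extended real;
`⊥` if `k ≤ 0`, `⊤` if `k ≥ |I| + 1`). -/
def orderStat {n : ℕ} (y : Fin n → ℝ) (I : Finset (Fin n)) (k : ℤ) : EReal :=
  if k ≤ 0 then ⊥
  else if (I.card : ℤ) < k then ⊤
  else (((I.val.map y).sort (· ≤ ·)).getD (k.toNat - 1) 0 : ℝ)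

/-- The constant `C_{I,J}` for discrete intervals `I=[c:d] ⊆ J=[a:b] ⊆ [0:n-1]`
(0-based indexing; 1-based `[s:t] ⊆ [j1:j2] ⊆ [1:n]` corresponds to
`c = s-1, d = t-1, a = j1-1, b = j2-1`). -/
def Cconst (n c d a b : ℕ) : ℝ :=
  if 0 < a ∧ b < n - 1 then
    if a < c ∧ d < b then 1 else if c = a ∧ d = b then -1 else 0
  else if a = 0 ∧ b < n - 1 then
    if a < c ∧ d < b then 1 else if c = a ∧ d = b then -(1/2)
      else if c = 0 ∧ d < b then 1/2 else 0
  else if 0 < a ∧ b = n - 1 then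
    if a < c ∧ d < b then 1 else if c = a ∧ d = b then -(1/2)
      else if a < c ∧ d = b then 1/2 else 0
  else
    if a < c ∧ d < b then 1 else if c = a ∧ d = b then 0 else 1/2

/-- `u^τ_{I,J} = τ|I| - 2λ C_{I,J}` for `I=[c:d] ⊆ J=[a:b]`. -/
def uIJ (τ lam : ℝ) (n c d a b : ℕ) : ℝ :=
  τ * ((d : ℝ) - (c : ℝ) + 1) - 2 * lam * Cconst n c d a b

/-- `l^τ_{I,J} = τ|I| + 2λ C_{I,J}` for `I=[c:d] ⊆ J=[a:b]`. -/
def lIJ (τ lam : ℝ) (n c d a b : ℕ) : ℝ :=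
  τ * ((d : ℝ) - (c : ℝ) + 1) + 2 * lam * Cconst n c d a b

/-- Upper envelope `U^τ_i`: min over intervals `J ∋ i` of the max over
subintervals `I ⊆ J` with `i ∈ I` of `y_{I,(⌊u^τ_{I,J}⌋+1)}`. -/
def Uenv {n : ℕ} (τ lam : ℝ) (y : Fin n → ℝ) (i : Fin n) : EReal :=
  ⨅ (a : Fin n) (b : Fin n) (_ : a ≤ i) (_ : i ≤ b),
    ⨆ (c : Fin n) (d : Fin n) (_ : a ≤ c) (_ : c ≤ i) (_ : i ≤ d) (_ : d ≤ b),
      orderStat y (Finset.Icc c d) (⌊uIJ τ lam n (c : ℕ) (d : ℕ) (a : ℕ) (b : ℕ)⌋ + 1)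

/-- Lower envelope `L^τ_i`: max over intervals `J ∋ i` of the min over
subintervals `I ⊆ J` with `i ∈ I` of `y_{I,(⌈l^τ_{I,J}⌉)}`. -/
def Lenv {n : ℕ} (τ lam : ℝ) (y : Fin n → ℝ) (i : Fin n) : EReal :=
  ⨆ (a : Fin n) (b : Fin n) (_ : a ≤ i) (_ : i ≤ b),
    ⨅ (c : Fin n) (d : Fin n) (_ : a ≤ c) (_ : c ≤ i) (_ : i ≤ d) (_ : d ≤ b),
      orderStat y (Finset.Icc c d) ⌈lIJ τ lam n (c : ℕ) (d : ℕ) (a : ℕ) (b : ℕ)⌉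

/-- Admissible dual (KKT) variables `(g, z)` for a candidate solution `θ`.
`z` is indexed by `Fin (n+1)` (so `z 0,…,z n` with `z 0 = z n = 0`); the
edge between coordinates `j` and `j+1` (0-based) corresponds to `z (j+1)`. -/
def IsDual {n : ℕ} (τ lam : ℝ) (y θ : Fin n → ℝ) (g : Fin n → ℝ)
    (z : Fin (n + 1) → ℝ) : Prop :=
  z 0 = 0 ∧ z (Fin.last n) = 0 ∧
  (∀ j : Fin n, ∀ h : (j : ℕ) + 1 < n,
    (θ ⟨(j : ℕ) + 1, h⟩ < θ j → z j.succ = lam) ∧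
    (θ j = θ ⟨(j : ℕ) + 1, h⟩ → -lam ≤ z j.succ ∧ z j.succ ≤ lam) ∧
    (θ j < θ ⟨(j : ℕ) + 1, h⟩ → z j.succ = -lam)) ∧
  (∀ j : Fin n,
    (θ j < y j → g j = -τ) ∧
    (θ j = y j → -τ ≤ g j ∧ g j ≤ 1 - τ) ∧
    (y j < θ j → g j = 1 - τ)) ∧
  (∀ a b : Fin n, a ≤ b → (∑ j ∈ Finset.Icc a b, g j) = z a.castSucc - z b.succ)

/-- `sign_+(x) = 1` if `x ≥ 0`, `-1` if `x < 0`. -/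
def signP (x : ℝ) : ℝ := if 0 ≤ x then 1 else -1

/-- `sign_-(x) = 1` if `x > 0`, `-1` if `x ≤ 0`. -/
def signM (x : ℝ) : ℝ := if 0 < x then 1 else -1

/-- Submodularity with respect to the coordinatewise lattice structure on `ℝ^n`. -/
def Submodular {n : ℕ} (P : (Fin n → ℝ) → ℝ) : Prop :=
  ∀ x y : Fin n → ℝ, P (x ⊔ y) + P (x ⊓ y) ≤ P x + P y

/-- Penalized quantile regression objective with a general penalty `P`. -/
def Gobj {n : ℕ} (τ lam : ℝ) (y : Fin n → ℝ) (P : (Fin n → ℝ) → ℝ)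
    (θ : Fin n → ℝ) : ℝ :=
  (∑ j : Fin n, qloss τ (y j - θ j)) + lam * P θ

end QTVD

/-! If `I = Ĵ`, then `C_{Ĵ,Ĵ} = -K/2`, where `K` is the number of edges joining `Ĵ` to its
complement, so the claim reads `λK < (1-τ)|Ĵ|`. Raising `θ̂^max` by a small `ε > 0` on `Ĵ` lowers
the total variation by exactly `Kε`, because both outside neighbours lie strictly above `Ĵ`,
and raises the loss by at most `(1-τ)|Ĵ|ε`. So if `λK ≥ (1-τ)|Ĵ|`, the raised vector is again a
solution, with a larger `i`-th coordinate. If `I ≠ Ĵ`, then `C_{I,Ĵ} ≥ 0` and `τ < 1` suffices. -/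

namespace QTVD

open Filter Topology

variable {n : ℕ}

theorem qloss_sub_le (τ x : ℝ) {ε : ℝ} (hε : 0 ≤ ε) :
    qloss τ (x - ε) ≤ qloss τ x + (1 - τ) * ε := by
  unfold qloss
  apply max_le
  · nlinarith [le_max_left (τ * x) ((τ - 1) * x)]
  · linarith [le_max_right (τ * x) ((τ - 1) * x)]

def raiseOn (a b : Fin n) (ε : ℝ) (θ : Fin n → ℝ) : Fin n → ℝ :=
  fun u => θ u + if u ∈ Finset.Icc a b then ε else 0

def boundaryEdgeCount (n a b : ℕ) : ℝ :=
  (if 0 < a then 1 else 0) + (if b + 1 < n then 1 else 0)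

theorem abs_raiseOn_sub_raiseOn {a b j j' : Fin n} {ε : ℝ} {θ : Fin n → ℝ}
    (hab : a ≤ b) (hε : 0 ≤ ε) (hj : (j' : ℕ) = j + 1)
    (hL : j' = a → θ a + ε < θ j) (hR : j = b → θ b + ε < θ j') :
    |raiseOn a b ε θ j' - raiseOn a b ε θ j|
      = |θ j' - θ j| - ((if j' = a then ε else 0) + (if j = b then ε else 0)) := by
  simp only [raiseOn, Finset.mem_Icc, Fin.le_def, Fin.ext_iff] at *
  by_cases hja : (j' : ℕ) = a
  · have hgap := hL hja
    rw [if_pos (by omega), if_neg (by omega), if_pos hja, if_neg (by omega),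
      abs_of_neg (by rw [Fin.ext hja]; linarith), abs_of_neg (by rw [Fin.ext hja]; linarith)]
    ring
  by_cases hjb : (j : ℕ) = b
  · have hgap := hR hjb
    rw [if_neg (by omega), if_pos (by omega), if_neg hja, if_pos hjb,
      abs_of_pos (by rw [Fin.ext hjb]; linarith), abs_of_pos (by rw [Fin.ext hjb]; linarith)]
    ring
  have hiff : (a : ℕ) ≤ j' ∧ (j' : ℕ) ≤ b ↔ (a : ℕ) ≤ j ∧ (j : ℕ) ≤ b := by omega
  simp only [hiff, if_neg hja, if_neg hjb]
  split_ifs <;> ring_nf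

theorem sum_ite_val_add_one_eq (a : Fin n) (ε : ℝ) :
    ∑ j : Fin n, (if (j : ℕ) + 1 = a then ε else 0) = if 0 < (a : ℕ) then ε else 0 := by
  by_cases ha : 0 < (a : ℕ)
  · rw [if_pos ha, Finset.sum_eq_single ⟨(a : ℕ) - 1, by omega⟩ (fun j _ hj => if_neg
      fun h => hj (Fin.ext (by simp only; omega))) (by simp)]
    exact if_pos (by simp only; omega)
  · rw [if_neg ha]
    exact Finset.sum_eq_zero fun j _ => if_neg (by omega)

theorem TV_raiseOn {a b : Fin n} {ε : ℝ} {θ : Fin n → ℝ} (hab : a ≤ b) (hε : 0 ≤ ε)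
    (hL : ∀ _h : 0 < (a : ℕ),
      θ a + ε < θ ⟨(a : ℕ) - 1, lt_of_le_of_lt (Nat.sub_le _ _) a.isLt⟩)
    (hR : ∀ h : (b : ℕ) + 1 < n, θ b + ε < θ ⟨(b : ℕ) + 1, h⟩) :
    TV (raiseOn a b ε θ) = TV θ - boundaryEdgeCount n a b * ε := by
  have hedge : ∀ j : Fin n,
      (if h : (j : ℕ) + 1 < n then
        |raiseOn a b ε θ ⟨(j : ℕ) + 1, h⟩ - raiseOn a b ε θ j| else 0)
      = (if h : (j : ℕ) + 1 < n then |θ ⟨(j : ℕ) + 1, h⟩ - θ j| else 0)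
        - ((if (j : ℕ) + 1 = a then ε else 0) + (if j = b ∧ (b : ℕ) + 1 < n then ε else 0)) := by
    intro j
    by_cases h : (j : ℕ) + 1 < n
    · have hjb : j = b ∧ (b : ℕ) + 1 < n ↔ j = b := ⟨And.left, fun hjb => ⟨hjb, hjb ▸ h⟩⟩
      rw [dif_pos h, dif_pos h, abs_raiseOn_sub_raiseOn hab hε rfl]
      · simp only [hjb]
        simp only [Fin.ext_iff]
      · intro hja
        convert hL (by simp [← hja]) using 2
        exact Fin.ext (by rw [← hja]; simp)
      · rintro rfl
        exact hR h
    · rw [dif_neg h, dif_neg h, if_neg (by omega), if_neg (by omega)]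
      ring
  have hright : ∑ j : Fin n, (if j = b ∧ (b : ℕ) + 1 < n then ε else 0)
      = if (b : ℕ) + 1 < n then ε else 0 := by
    by_cases hb : (b : ℕ) + 1 < n <;> simp [hb]
  unfold TV
  rw [Finset.sum_congr rfl fun j _ => hedge j, Finset.sum_sub_distrib, Finset.sum_add_distrib,
    sum_ite_val_add_one_eq, hright, boundaryEdgeCount]
  split_ifs <;> ring

theorem sum_qloss_raiseOn_le (τ : ℝ) (y θ : Fin n → ℝ) (a b : Fin n) {ε : ℝ} (hε : 0 ≤ ε) :
    ∑ u, qloss τ (y u - raiseOn a b ε θ u)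
      ≤ ∑ u, qloss τ (y u - θ u) + (1 - τ) * (Finset.Icc a b).card * ε := by
  calc ∑ u, qloss τ (y u - raiseOn a b ε θ u)
      ≤ ∑ u, (qloss τ (y u - θ u) + (1 - τ) * if u ∈ Finset.Icc a b then ε else 0) := by
        refine Finset.sum_le_sum fun u _ => ?_
        rw [raiseOn, ← sub_sub]
        exact qloss_sub_le τ _ (by split_ifs <;> simp [hε])
    _ = ∑ u, qloss τ (y u - θ u) + (1 - τ) * (Finset.Icc a b).card * ε := by
        rw [Finset.sum_add_distrib, ← Finset.mul_sum, Finset.sum_ite_mem, Finset.univ_inter,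
          Finset.sum_const, nsmul_eq_mul, mul_assoc]

theorem obj_raiseOn_le (τ lam : ℝ) (y : Fin n → ℝ) {θ : Fin n → ℝ} {a b : Fin n} {ε : ℝ}
    (hab : a ≤ b) (hε : 0 ≤ ε)
    (hL : ∀ _h : 0 < (a : ℕ),
      θ a + ε < θ ⟨(a : ℕ) - 1, lt_of_le_of_lt (Nat.sub_le _ _) a.isLt⟩)
    (hR : ∀ h : (b : ℕ) + 1 < n, θ b + ε < θ ⟨(b : ℕ) + 1, h⟩) :
    obj τ lam y (raiseOn a b ε θ)
      ≤ obj τ lam y θ + ((1 - τ) * (Finset.Icc a b).card - lam * boundaryEdgeCount n a b) * ε := by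
  have hloss := sum_qloss_raiseOn_le τ y θ a b hε
  rw [obj, obj, TV_raiseOn hab hε hL hR]
  linarith

theorem lam_mul_boundaryEdgeCount_lt {τ lam : ℝ} {y θ : Fin n → ℝ} {i a b : Fin n}
    (hθ : θ ∈ sol τ lam y) (hattain : ∀ θ' ∈ sol τ lam y, θ' i ≤ θ i)
    (hai : a ≤ i) (hib : i ≤ b) (hJle : ∀ u ∈ Finset.Icc a b, θ u ≤ θ i)
    (hmaxl : ∀ _h : 0 < (a : ℕ),
      θ i < θ ⟨(a : ℕ) - 1, lt_of_le_of_lt (Nat.sub_le _ _) a.isLt⟩)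
    (hmaxr : ∀ h : (b : ℕ) + 1 < n, θ i < θ ⟨(b : ℕ) + 1, h⟩) :
    lam * boundaryEdgeCount n a b < (1 - τ) * (Finset.Icc a b).card := by
  have hab := hai.trans hib
  have hpos : ∀ᶠ ε in 𝓝[>] (0 : ℝ), 0 < ε := self_mem_nhdsWithin
  have hsmall : ∀ {x : ℝ}, 0 < x → ∀ᶠ ε in 𝓝[>] (0 : ℝ), ε < x :=
    fun hx => nhdsWithin_le_nhds (eventually_lt_nhds hx)
  obtain ⟨ε, hε, hεL, hεR⟩ : ∃ ε : ℝ, 0 < ε ∧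
      (∀ h : 0 < (a : ℕ), ε < θ ⟨(a : ℕ) - 1, lt_of_le_of_lt (Nat.sub_le _ _) a.isLt⟩ - θ i) ∧
      (∀ h : (b : ℕ) + 1 < n, ε < θ ⟨(b : ℕ) + 1, h⟩ - θ i) :=
    (hpos.and ((eventually_all.2 fun h => hsmall (sub_pos.2 (hmaxl h))).and
      (eventually_all.2 fun h => hsmall (sub_pos.2 (hmaxr h))))).exists
  have hobj := obj_raiseOn_le τ lam y hab hε.le
    (fun h => by linarith [hJle a (Finset.left_mem_Icc.2 hab), hεL h])
    (fun h => by linarith [hJle b (Finset.right_mem_Icc.2 hab), hεR h])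
  by_contra! hle
  have hsol : raiseOn a b ε θ ∈ sol τ lam y := fun ζ =>
    (hobj.trans (by nlinarith)).trans (hθ ζ)
  have hraised := hattain _ hsol
  simp only [raiseOn, if_pos (Finset.mem_Icc.2 ⟨hai, hib⟩)] at hraised
  linarith

theorem Cconst_self {a b : ℕ} (hb : b < n) :
    Cconst n a b a b = -(boundaryEdgeCount n a b / 2) := by
  unfold Cconst boundaryEdgeCount
  split_ifs <;> first | (exfalso; omega) | norm_num

theorem Cconst_nonneg {c d a b : ℕ} (h : ¬(c = a ∧ d = b)) : 0 ≤ Cconst n c d a b := by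
  unfold Cconst
  split_ifs <;> norm_num

end QTVD

theorem u_lt_card_for_maximal_solution_general
    {n : ℕ} (τ lam : ℝ) (hτ1 : τ < 1) (hlam : 0 ≤ lam)
    (y : Fin n → ℝ) (i : Fin n) (θmax : Fin n → ℝ)
    (hθ : θmax ∈ QTVD.sol τ lam y)
    (hattain : ∀ θ ∈ QTVD.sol τ lam y, θ i ≤ θmax i)
    (a b : Fin n) (hai : a ≤ i) (hib : i ≤ b)
    (hJle : ∀ u ∈ Finset.Icc a b, θmax u ≤ θmax i)
    (hmaxl : ∀ _h : 0 < (a : ℕ),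
      θmax i < θmax ⟨(a : ℕ) - 1, lt_of_le_of_lt (Nat.sub_le _ _) a.isLt⟩)
    (hmaxr : ∀ h : (b : ℕ) + 1 < n, θmax i < θmax ⟨(b : ℕ) + 1, h⟩) :
    ∀ c d : Fin n, a ≤ c → c ≤ i → i ≤ d → d ≤ b →
      QTVD.uIJ τ lam n c d a b < (d : ℝ) - (c : ℝ) + 1 := by
  intro c d _ hci hid _
  have hcd : (c : ℝ) ≤ d := Nat.cast_le.2 (hci.trans hid)
  by_cases hIJ : (c : ℕ) = a ∧ (d : ℕ) = b
  · obtain ⟨rfl, rfl⟩ : c = a ∧ d = b := ⟨Fin.ext hIJ.1, Fin.ext hIJ.2⟩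
    have hkey := QTVD.lam_mul_boundaryEdgeCount_lt hθ hattain hai hib hJle hmaxl hmaxr
    rw [Fin.card_Icc, Nat.cast_sub (by omega)] at hkey
    rw [QTVD.uIJ, QTVD.Cconst_self d.isLt]
    push_cast at hkey
    linarith
  · have hC := QTVD.Cconst_nonneg (n := n) hIJ
    rw [QTVD.uIJ]
    nlinarith

/-- `u^τ_{I,Ĵ} < |I|` for the maximal solution.
Let `θmax ∈ S^τ` attain the maximal feasible value at location `i` and let
`Ĵ = [a:b]` be the largest interval containing `i` on which `θmax_u ≤ θmax_i`.
Then `u^τ_{I,Ĵ} < |I|` for every discrete interval `I = [c:d] ⊆ Ĵ` containing `i`. -/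
theorem u_lt_card_for_maximal_solution
    {n : ℕ} (τ lam : ℝ) (hτ0 : 0 < τ) (hτ1 : τ < 1) (hlam : 0 ≤ lam)
    (y : Fin n → ℝ) (i : Fin n) (θmax : Fin n → ℝ)
    (hθ : θmax ∈ QTVD.sol τ lam y)
    (hattain : ∀ θ ∈ QTVD.sol τ lam y, θ i ≤ θmax i)
    (a b : Fin n) (hai : a ≤ i) (hib : i ≤ b)
    (hJle : ∀ u ∈ Finset.Icc a b, θmax u ≤ θmax i)
    (hmaxl : ∀ _h : 0 < (a : ℕ),
      θmax i < θmax ⟨(a : ℕ) - 1, lt_of_le_of_lt (Nat.sub_le _ _) a.isLt⟩)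
    (hmaxr : ∀ h : (b : ℕ) + 1 < n, θmax i < θmax ⟨(b : ℕ) + 1, h⟩) :
    ∀ c d : Fin n, a ≤ c → c ≤ i → i ≤ d → d ≤ b →
      QTVD.uIJ τ lam n c d a b < (d : ℝ) - (c : ℝ) + 1 :=
  u_lt_card_for_maximal_solution_general τ lam hτ1 hlam y i θmax hθ hattain a b hai hib hJle hmaxl
    hmaxr
end
end

section
/- Let 0<τ1≤τ2<1 and λ≥0, and let θ̂^{(1)}∈S^{τ1} and θ̂^{(2)}∈S^{τ2} be quantile TVD solutions at levels τ1 and τ2 respectively (with a common tuning parameter λ). Define θ̃^{(1)} = θ̂^{(1)} ∧ θ̂^{(2)} (coordinatewise minimum) and θ̃^{(2)} = θ̂^{(1)} ∨ θ̂^{(2)} (coordinatewise maximum). Then θ̃^{(1)}∈S^{τ1} and θ̃^{(2)}∈S^{τ2}. -/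
open scoped BigOperators

noncomputable section

/-!
The quantile loss is `ρ_τ(x) = τ x + max 0 (-x)`. Replacing the pair `(θ₁ i, θ₂ i)` by
`(min, max)` permutes the arguments of the `max 0 (-x)` parts and changes the linear parts by
`(τ₁ - τ₂) (θ₁ i - θ₂ i)⁺ ≤ 0`, while total variation is submodular for the coordinatewise
lattice. Hence `F₁ (θ₁ ⊓ θ₂) + F₂ (θ₁ ⊔ θ₂) ≤ F₁ θ₁ + F₂ θ₂` for the two objectives, and
minimality of `θ₁` and `θ₂` forces equality in both terms.
-/

namespace QTVD

lemma qloss_eq_mul_add_max_neg (τ x : ℝ) : qloss τ x = τ * x + max 0 (-x) := by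
  rcases le_total 0 x with h | h
  · rw [qloss, max_eq_left (by nlinarith), max_eq_left (by linarith)]; ring
  · rw [qloss, max_eq_right (by nlinarith), max_eq_right (by linarith)]; ring

lemma qloss_sub_min_add_qloss_sub_max_le {τ₁ τ₂ : ℝ} (hτ : τ₁ ≤ τ₂) (v a b : ℝ) :
    qloss τ₁ (v - min a b) + qloss τ₂ (v - max a b) ≤ qloss τ₁ (v - a) + qloss τ₂ (v - b) := by
  rcases le_total a b with h | h
  · rw [min_eq_left h, max_eq_right h]
  · simp only [min_eq_right h, max_eq_left h, qloss_eq_mul_add_max_neg]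
    linarith [mul_nonneg (sub_nonneg.2 hτ) (sub_nonneg.2 h)]

lemma abs_sub_add_abs_sub_le_of_le_of_le {a b a' b' : ℝ} (h : a ≤ b) (h' : b' ≤ a') :
    |b' - a| + |a' - b| ≤ |a' - a| + |b' - b| := by
  rcases abs_cases (b' - a) with h1 | h1 <;>
    rcases abs_cases (a' - b) with h2 | h2 <;>
    rcases abs_cases (a' - a) with h3 | h3 <;>
    rcases abs_cases (b' - b) with h4 | h4 <;>
    linarith

lemma abs_sub_min_add_abs_sub_max_le (a b a' b' : ℝ) :
    |min a' b' - min a b| + |max a' b' - max a b| ≤ |a' - a| + |b' - b| := by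
  rcases le_total a b with h | h <;> rcases le_total a' b' with h' | h'
  · rw [min_eq_left h, max_eq_right h, min_eq_left h', max_eq_right h']
  · rw [min_eq_left h, max_eq_right h, min_eq_right h', max_eq_left h']
    exact abs_sub_add_abs_sub_le_of_le_of_le h h'
  · rw [min_eq_right h, max_eq_left h, min_eq_left h', max_eq_right h', add_comm |a' - a|]
    exact abs_sub_add_abs_sub_le_of_le_of_le h h'
  · rw [min_eq_right h, max_eq_left h, min_eq_right h', max_eq_left h', add_comm]

lemma submodular_TV {n : ℕ} : Submodular (TV (n := n)) := by
  intro a b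
  simp only [TV, ← Finset.sum_add_distrib]
  refine Finset.sum_le_sum fun i _ => ?_
  split_ifs with h
  · simpa only [Pi.inf_apply, Pi.sup_apply, add_comm] using
      abs_sub_min_add_abs_sub_max_le (a i) (b i) (a ⟨i + 1, h⟩) (b ⟨i + 1, h⟩)
  · simp

lemma Gobj_inf_add_Gobj_sup_le {n : ℕ} {τ₁ τ₂ lam : ℝ} (hτ : τ₁ ≤ τ₂) (hlam : 0 ≤ lam)
    (y : Fin n → ℝ) {P : (Fin n → ℝ) → ℝ} (hP : Submodular P) (θ θ' : Fin n → ℝ) :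
    Gobj τ₁ lam y P (θ ⊓ θ') + Gobj τ₂ lam y P (θ ⊔ θ') ≤
      Gobj τ₁ lam y P θ + Gobj τ₂ lam y P θ' := by
  have hloss : ∑ j, qloss τ₁ (y j - (θ ⊓ θ') j) + ∑ j, qloss τ₂ (y j - (θ ⊔ θ') j) ≤
      ∑ j, qloss τ₁ (y j - θ j) + ∑ j, qloss τ₂ (y j - θ' j) := by
    simp only [← Finset.sum_add_distrib]
    exact Finset.sum_le_sum fun j _ => qloss_sub_min_add_qloss_sub_max_le hτ _ _ _
  have hpen := mul_le_mul_of_nonneg_left (hP θ θ') hlam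
  simp only [Gobj]
  linarith

end QTVD

lemma inf_sup_forall_le_of_add_le {α β : Type*} [Lattice α] [AddCommMonoid β] [PartialOrder β]
    [IsOrderedCancelAddMonoid β] {f₁ f₂ : α → β}
    (hf : ∀ x x', f₁ (x ⊓ x') + f₂ (x ⊔ x') ≤ f₁ x + f₂ x') {x x' : α}
    (hx : ∀ η, f₁ x ≤ f₁ η) (hx' : ∀ η, f₂ x' ≤ f₂ η) :
    (∀ η, f₁ (x ⊓ x') ≤ f₁ η) ∧ (∀ η, f₂ (x ⊔ x') ≤ f₂ η) := by
  have hinf : f₁ (x ⊓ x') ≤ f₁ x :=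
    le_of_add_le_add_right ((hf x x').trans (add_le_add_right (hx' _) _))
  have hsup : f₂ (x ⊔ x') ≤ f₂ x' :=
    le_of_add_le_add_left ((hf x x').trans (add_le_add_left (hx _) _))
  exact ⟨fun η => hinf.trans (hx η), fun η => hsup.trans (hx' η)⟩

theorem quantile_tvd_cross_level_lattice_general
    {n : ℕ} (τ₁ τ₂ lam : ℝ)
    (hτ12 : τ₁ ≤ τ₂) (hlam : 0 ≤ lam)
    (y : Fin n → ℝ)
    (θ₁ : Fin n → ℝ) (hθ₁ : θ₁ ∈ QTVD.sol τ₁ lam y)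
    (θ₂ : Fin n → ℝ) (hθ₂ : θ₂ ∈ QTVD.sol τ₂ lam y) :
    θ₁ ⊓ θ₂ ∈ QTVD.sol τ₁ lam y ∧ θ₁ ⊔ θ₂ ∈ QTVD.sol τ₂ lam y :=
  inf_sup_forall_le_of_add_le
    (QTVD.Gobj_inf_add_Gobj_sup_le hτ12 hlam y QTVD.submodular_TV) hθ₁ hθ₂

/-- Cross-level lattice property for quantile TVD.
For `0 < τ₁ ≤ τ₂ < 1` and a common tuning parameter `λ ≥ 0`, if `θ̂⁽¹⁾ ∈ S^{τ₁}`
and `θ̂⁽²⁾ ∈ S^{τ₂}`, then `θ̂⁽¹⁾ ⊓ θ̂⁽²⁾ ∈ S^{τ₁}` and `θ̂⁽¹⁾ ⊔ θ̂⁽²⁾ ∈ S^{τ₂}`. -/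
theorem quantile_tvd_cross_level_lattice
    {n : ℕ} (τ₁ τ₂ lam : ℝ)
    (hτ1 : 0 < τ₁) (hτ12 : τ₁ ≤ τ₂) (hτ2 : τ₂ < 1) (hlam : 0 ≤ lam)
    (y : Fin n → ℝ)
    (θ₁ : Fin n → ℝ) (hθ₁ : θ₁ ∈ QTVD.sol τ₁ lam y)
    (θ₂ : Fin n → ℝ) (hθ₂ : θ₂ ∈ QTVD.sol τ₂ lam y) :
    θ₁ ⊓ θ₂ ∈ QTVD.sol τ₁ lam y ∧ θ₁ ⊔ θ₂ ∈ QTVD.sol τ₂ lam y :=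
  quantile_tvd_cross_level_lattice_general τ₁ τ₂ lam hτ12 hlam y θ₁ hθ₁ θ₂ hθ₂
end
end
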